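/- arXiv:2512.06968 — 5 statements merged into one kernel-verified Lean document; each statement's English description precedes it below -/
import Mathlib

section
/- The strong limit R_∞ of the alternating residual flow is a simultaneous fixed point of both residual maps: R_∞ = Φ_{P_A}(R_∞) = Φ_{P_B}(R_∞), and its range is contained in K = ker P_A ∩ ker P_B. -/
/-!
Write `Q_n = R_n^{1/2}` and `Q_∞ = R_∞^{1/2}`. At the steps applying `Φ_P`,
`‖P Q_n x‖² = ⟨R_n x, x⟩ - ⟨R_{n+1} x, x⟩ → 0`, as both quadratic forms tend to `⟨R_∞ x, x⟩`.
For `u = P u` this gives `⟨Q_n u, u⟩ = ⟨P Q_n u, u⟩ → 0`, and Cauchy–Schwarz for the positive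
form of `Q_n` gives `‖Q_n u‖⁴ ≤ ⟨Q_n u, u⟩ ‖R_n u‖ ‖Q_n u‖ → 0`, while `‖Q_n u‖ → ‖Q_∞ u‖`.
Hence `Q_∞ P = 0` for `P = P_A, P_B`, which gives both fixed-point identities and
`P R_∞ = (Q_∞ P)^* Q_∞ = 0`.
-/

open Filter Topology
open scoped InnerProductSpace

lemma IsSelfAdjoint.mul_mul_self_eq_zero {A : Type*} [NonUnitalSemiring A] [StarRing A]
    {P T : A} (hP : IsSelfAdjoint P) (hT : IsSelfAdjoint T) (h : T * P = 0) : P * (T * T) = 0 := by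
  have h' : P * T = 0 := by simpa [hP.star_eq, hT.star_eq] using congrArg star h
  rw [← mul_assoc, h', zero_mul]

lemma ContinuousLinearMap.range_le_ker_of_mul_eq_zero {R M : Type*} [Semiring R]
    [AddCommMonoid M] [Module R M] [TopologicalSpace M] {P T : M →L[R] M} (h : P * T = 0) :
    LinearMap.range (T : M →ₗ[R] M) ≤ LinearMap.ker (P : M →ₗ[R] M) :=
  LinearMap.range_le_ker_iff.mpr (by ext x; exact congrArg (· x) h)

section Operators

variable {H : Type*} [NormedAddCommGroup H] [InnerProductSpace ℂ H] [CompleteSpace H]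

lemma IsSelfAdjoint.inner_apply_left {T : H →L[ℂ] H} (hT : IsSelfAdjoint T) (x y : H) :
    ⟪T x, y⟫_ℂ = ⟪x, T y⟫_ℂ :=
  hT.isSymmetric x y

lemma IsSelfAdjoint.re_inner_mul_self_apply_self {T : H →L[ℂ] H} (hT : IsSelfAdjoint T) (x : H) :
    (⟪(T * T) x, x⟫_ℂ).re = ‖T x‖ ^ 2 := by
  rw [mul_apply_eq_comp, hT.inner_apply_left, ← inner_self_eq_norm_sq (𝕜 := ℂ),
    RCLike.re_to_complex]

lemma ContinuousLinearMap.IsPositive.re_inner_sq_le {T : H →L[ℂ] H} (hT : T.IsPositive)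
    (x y : H) : (⟪T x, y⟫_ℂ).re ^ 2 ≤ (⟪T x, x⟫_ℂ).re * (⟪T y, y⟫_ℂ).re := by
  set S := CFC.sqrt T
  have hS : IsSelfAdjoint S := (CFC.sqrt_nonneg T).isSelfAdjoint
  have hSS : S * S = T := CFC.sqrt_mul_sqrt_self T ((nonneg_iff_isPositive T).mpr hT)
  have hTS : ⟪T x, y⟫_ℂ = ⟪S x, S y⟫_ℂ := by
    rw [← hSS, mul_apply_eq_comp, hS.inner_apply_left]
  rw [hTS, ← hSS, hS.re_inner_mul_self_apply_self, hS.re_inner_mul_self_apply_self, ← mul_pow]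
  calc (⟪S x, S y⟫_ℂ).re ^ 2 ≤ ‖⟪S x, S y⟫_ℂ‖ ^ 2 := by
        rw [← sq_abs]; gcongr; exact Complex.abs_re_le_norm _
    _ ≤ (‖S x‖ * ‖S y‖) ^ 2 := by gcongr; exact norm_inner_le_norm _ _

lemma ContinuousLinearMap.IsPositive.norm_apply_pow_four_le {T : H →L[ℂ] H} (hT : T.IsPositive)
    (x : H) : ‖T x‖ ^ 4 ≤ (⟪T x, x⟫_ℂ).re * (‖(T * T) x‖ * ‖T x‖) := by
  calc ‖T x‖ ^ 4 = (‖T x‖ ^ 2) ^ 2 := by ring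
    _ = (⟪T x, T x⟫_ℂ).re ^ 2 := by rw [← inner_self_eq_norm_sq (𝕜 := ℂ), RCLike.re_to_complex]
    _ ≤ (⟪T x, x⟫_ℂ).re * (⟪T (T x), T x⟫_ℂ).re := hT.re_inner_sq_le x (T x)
    _ ≤ (⟪T x, x⟫_ℂ).re * (‖(T * T) x‖ * ‖T x‖) := by
        gcongr
        · exact hT.re_inner_nonneg_left x
        · exact (Complex.re_le_norm _).trans (norm_inner_le_norm _ _)

lemma IsStarProjection.re_inner_apply_self {P : H →L[ℂ] H} (hP : IsStarProjection P) (x : H) :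
    (⟪P x, x⟫_ℂ).re = ‖P x‖ ^ 2 := by
  rw [← hP.isSelfAdjoint.re_inner_mul_self_apply_self, hP.isIdempotentElem.eq]

lemma IsStarProjection.re_inner_conj_one_sub_apply_self {P Q : H →L[ℂ] H}
    (hP : IsStarProjection P) (hQ : IsSelfAdjoint Q) (x : H) :
    (⟪(Q * (1 - P) * Q) x, x⟫_ℂ).re = ‖Q x‖ ^ 2 - ‖P (Q x)‖ ^ 2 := by
  rw [mul_apply_eq_comp, mul_apply_eq_comp, hQ.inner_apply_left, sub_apply,
    one_apply_eq_self, inner_sub_left, Complex.sub_re, ← inner_self_eq_norm_sq (𝕜 := ℂ),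
    RCLike.re_to_complex, hP.re_inner_apply_self]

end Operators

section ResidualFlow

variable {H : Type*} [NormedAddCommGroup H] [InnerProductSpace ℂ H] [CompleteSpace H]
  {P Rinf Qinf : H →L[ℂ] H} {R Q : ℕ → H →L[ℂ] H}

lemma tendsto_norm_sqrt_apply (hQ : ∀ n, IsSelfAdjoint (Q n)) (hQR : ∀ n, Q n * Q n = R n)
    (hQinf : IsSelfAdjoint Qinf) (hQRinf : Qinf * Qinf = Rinf)
    (hR : ∀ x, Tendsto (fun n => R n x) atTop (𝓝 (Rinf x))) (x : H) :
    Tendsto (fun n => ‖Q n x‖) atTop (𝓝 ‖Qinf x‖) := by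
  have hsq : Tendsto (fun n => ‖Q n x‖ ^ 2) atTop (𝓝 (‖Qinf x‖ ^ 2)) := by
    simp_rw [← (hQ _).re_inner_mul_self_apply_self, hQR, ← hQinf.re_inner_mul_self_apply_self,
      hQRinf]
    exact Complex.continuous_re.continuousAt.tendsto.comp ((hR x).inner tendsto_const_nhds)
  simpa only [Real.sqrt_sq (norm_nonneg _)] using hsq.sqrt

lemma tendsto_proj_apply_zero_of_residual_step (hP : IsStarProjection P)
    (hQ : ∀ n, IsSelfAdjoint (Q n)) (hQR : ∀ n, Q n * Q n = R n)
    (hQinf : IsSelfAdjoint Qinf) (hQRinf : Qinf * Qinf = Rinf)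
    (hR : ∀ x, Tendsto (fun n => R n x) atTop (𝓝 (Rinf x)))
    {φ : ℕ → ℕ} (hφ : Tendsto φ atTop atTop)
    (hstep : ∀ n, R (φ n + 1) = Q (φ n) * (1 - P) * Q (φ n)) (x : H) :
    Tendsto (fun n => P (Q (φ n) x)) atTop (𝓝 0) := by
  have hnorm := tendsto_norm_sqrt_apply hQ hQR hQinf hQRinf hR x
  have hdrop : ∀ n, ‖P (Q (φ n) x)‖ ^ 2 = ‖Q (φ n) x‖ ^ 2 - ‖Q (φ n + 1) x‖ ^ 2 := by
    intro n
    rw [← (hQ (φ n + 1)).re_inner_mul_self_apply_self, hQR, hstep,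
      hP.re_inner_conj_one_sub_apply_self (hQ _)]
    ring
  have hsq : Tendsto (fun n => ‖P (Q (φ n) x)‖ ^ 2) atTop (𝓝 0) := by
    simp_rw [hdrop, ← sub_self (‖Qinf x‖ ^ 2)]
    exact ((hnorm.comp hφ).pow 2).sub
      (((hnorm.comp (tendsto_add_atTop_nat 1)).comp hφ).pow 2)
  rw [tendsto_zero_iff_norm_tendsto_zero]
  simpa only [Real.sqrt_sq (norm_nonneg _), Real.sqrt_zero] using hsq.sqrt

lemma apply_eq_zero_of_residual_step (hP : IsStarProjection P)
    (hQ : ∀ n, (Q n).IsPositive) (hQR : ∀ n, Q n * Q n = R n)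
    (hQinf : IsSelfAdjoint Qinf) (hQRinf : Qinf * Qinf = Rinf)
    (hR : ∀ x, Tendsto (fun n => R n x) atTop (𝓝 (Rinf x)))
    {φ : ℕ → ℕ} (hφ : Tendsto φ atTop atTop)
    (hstep : ∀ n, R (φ n + 1) = Q (φ n) * (1 - P) * Q (φ n)) {u : H} (hu : P u = u) :
    Qinf u = 0 := by
  have hQsa n := (hQ n).isSelfAdjoint
  have hnorm : Tendsto (fun n => ‖Q (φ n) u‖) atTop (𝓝 ‖Qinf u‖) :=
    (tendsto_norm_sqrt_apply hQsa hQR hQinf hQRinf hR u).comp hφ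
  have hinner : Tendsto (fun n => (⟪Q (φ n) u, u⟫_ℂ).re) atTop (𝓝 0) := by
    have hPu : ∀ n, ⟪Q (φ n) u, u⟫_ℂ = ⟪P (Q (φ n) u), u⟫_ℂ := fun n => by
      rw [hP.isSelfAdjoint.inner_apply_left, hu]
    simp_rw [hPu]
    simpa [Function.comp_def] using Complex.continuous_re.continuousAt.tendsto.comp
      ((tendsto_proj_apply_zero_of_residual_step hP hQsa hQR hQinf hQRinf hR hφ hstep u).inner
        (tendsto_const_nhds (x := u)))
  have hbound : Tendsto (fun n => (⟪Q (φ n) u, u⟫_ℂ).re * (‖(Q (φ n) * Q (φ n)) u‖ * ‖Q (φ n) u‖))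
      atTop (𝓝 0) := by
    simp_rw [hQR]
    simpa using hinner.mul (((hR u).comp hφ).norm.mul hnorm)
  have hle : ‖Qinf u‖ ^ 4 ≤ 0 :=
    le_of_tendsto_of_tendsto' (hnorm.pow 4) hbound fun n => (hQ _).norm_apply_pow_four_le u
  exact norm_eq_zero.mp <| pow_eq_zero_iff four_ne_zero |>.mp <| le_antisymm hle (by positivity)

lemma mul_eq_zero_of_residual_step (hP : IsStarProjection P)
    (hQ : ∀ n, (Q n).IsPositive) (hQR : ∀ n, Q n * Q n = R n)
    (hQinf : IsSelfAdjoint Qinf) (hQRinf : Qinf * Qinf = Rinf)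
    (hR : ∀ x, Tendsto (fun n => R n x) atTop (𝓝 (Rinf x)))
    {φ : ℕ → ℕ} (hφ : Tendsto φ atTop atTop)
    (hstep : ∀ n, R (φ n + 1) = Q (φ n) * (1 - P) * Q (φ n)) :
    Qinf * P = 0 := by
  refine ContinuousLinearMap.ext fun x => ?_
  rw [mul_apply_eq_comp, zero_apply]
  exact apply_eq_zero_of_residual_step hP hQ hQR hQinf hQRinf hR hφ hstep
    (by rw [← mul_apply_eq_comp, hP.isIdempotentElem.eq])

end ResidualFlow

theorem alternating_residual_flow_limit_fixed_point_general
    {H : Type*} [NormedAddCommGroup H] [InnerProductSpace ℂ H] [CompleteSpace H]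
    (PA PB : H →L[ℂ] H)
    (hPAsa : IsSelfAdjoint PA) (hPAidem : IsIdempotentElem PA)
    (hPBsa : IsSelfAdjoint PB) (hPBidem : IsIdempotentElem PB)
    (R Q : ℕ → (H →L[ℂ] H))
    (hQpos : ∀ n, (Q n).IsPositive) (hQsq : ∀ n, Q n * Q n = R n)
    (hflow : ∀ n, R (n + 1) = Q n * (1 - (if Even n then PB else PA)) * Q n)
    (Rinf Qinf : H →L[ℂ] H)
    (hQinfpos : Qinf.IsPositive) (hQinfsq : Qinf * Qinf = Rinf)
    (hconv : ∀ x : H, Tendsto (fun n => R n x) atTop (𝓝 (Rinf x))) :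
    Rinf = Qinf * (1 - PA) * Qinf ∧ Rinf = Qinf * (1 - PB) * Qinf ∧
      LinearMap.range (Rinf : H →ₗ[ℂ] H) ≤ LinearMap.ker (PA : H →ₗ[ℂ] H) ⊓ LinearMap.ker (PB : H →ₗ[ℂ] H) := by
  have hQinf := hQinfpos.isSelfAdjoint
  have hQA : Qinf * PA = 0 :=
    mul_eq_zero_of_residual_step ⟨hPAidem, hPAsa⟩ hQpos hQsq hQinf hQinfsq hconv
      (φ := fun k => 2 * k + 1) (StrictMono.tendsto_atTop fun a b h => by omega)
      fun k => by simpa [Nat.not_even_bit1] using hflow (2 * k + 1)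
  have hQB : Qinf * PB = 0 :=
    mul_eq_zero_of_residual_step ⟨hPBidem, hPBsa⟩ hQpos hQsq hQinf hQinfsq hconv
      (φ := fun k => 2 * k) (StrictMono.tendsto_atTop fun a b h => by omega)
      fun k => by simpa using hflow (2 * k)
  subst hQinfsq
  refine ⟨by rw [mul_sub, mul_one, hQA, sub_zero], by rw [mul_sub, mul_one, hQB, sub_zero],
    le_inf ?_ ?_⟩
  · exact ContinuousLinearMap.range_le_ker_of_mul_eq_zero (hPAsa.mul_mul_self_eq_zero hQinf hQA)
  · exact ContinuousLinearMap.range_le_ker_of_mul_eq_zero (hPBsa.mul_mul_self_eq_zero hQinf hQB)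

/-- The strong limit `R_∞` of the alternating residual flow is a simultaneous
fixed point of both residual maps, `R_∞ = Φ_{P_A}(R_∞) = Φ_{P_B}(R_∞)`, and its range is
contained in `K = ker P_A ∩ ker P_B`.  Here `Qinf` denotes the positive square root of `R_∞`. -/
theorem alternating_residual_flow_limit_fixed_point
    {H : Type*} [NormedAddCommGroup H] [InnerProductSpace ℂ H] [CompleteSpace H]
    (PA PB : H →L[ℂ] H)
    (hPAsa : IsSelfAdjoint PA) (hPAidem : IsIdempotentElem PA)
    (hPBsa : IsSelfAdjoint PB) (hPBidem : IsIdempotentElem PB)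
    (R Q : ℕ → (H →L[ℂ] H))
    (hR0 : (R 0).IsPositive)
    (hQpos : ∀ n, (Q n).IsPositive) (hQsq : ∀ n, Q n * Q n = R n)
    (hflow : ∀ n, R (n + 1) = Q n * (1 - (if Even n then PB else PA)) * Q n)
    (Rinf Qinf : H →L[ℂ] H) (hRinfpos : Rinf.IsPositive)
    (hQinfpos : Qinf.IsPositive) (hQinfsq : Qinf * Qinf = Rinf)
    (hconv : ∀ x : H, Tendsto (fun n => R n x) atTop (𝓝 (Rinf x))) :
    Rinf = Qinf * (1 - PA) * Qinf ∧ Rinf = Qinf * (1 - PB) * Qinf ∧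
      LinearMap.range (Rinf : H →ₗ[ℂ] H) ≤ LinearMap.ker (PA : H →ₗ[ℂ] H) ⊓ LinearMap.ker (PB : H →ₗ[ℂ] H) :=
  alternating_residual_flow_limit_fixed_point_general PA PB hPAsa hPAidem hPBsa hPBidem R Q hQpos
    hQsq hflow Rinf Qinf hQinfpos hQinfsq hconv
end

section
/- Let T ∈ B(H) be positive with range contained in K = ker P_A ∩ ker P_B. Then T^{1/2} also has range in K, Φ_{P_A}(T) = Φ_{P_B}(T) = T, and T is a fixed point of the alternating residual flow. Consequently the set of attainable limits {R_∞(R) : R ∈ B(H)_+} equals the set of positive operators supported on K. -/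
/-!
If a self-adjoint `P` kills `T = Q²` with `Q` self-adjoint, the C*-identity gives `P Q = 0`, so
`Φ_P(T) = Q (1 - P) Q = Q² = T` and the flow started at `T` never moves.

Conversely, along any flow `R (n+1) = Q n (1 - P n) Q n` the operators `R n` decrease, hence so do
their square roots `Q n` (the square root is operator monotone), and a decreasing sequence of
positive operators converges strongly. The one-step decrease `⟪(R n - R (n+1)) y, y⟫` equals
`‖P n Q n y‖²`, so `P n Q n → 0` strongly; applied to the convergent vectors `Q n x` this gives
`P n (R n x) → 0`, and reading this along even and odd `n` yields `P_B R_∞ = P_A R_∞ = 0`.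
-/

open Filter Topology

section CStarRing

variable {A : Type*}

theorem IsSelfAdjoint.mul_eq_zero_of_mul_mul_self_eq_zero [NonUnitalNormedRing A] [StarRing A]
    [CStarRing A] {p q : A} (hp : IsSelfAdjoint p) (hq : IsSelfAdjoint q) (h : p * (q * q) = 0) :
    p * q = 0 := by
  have hqp : q * p = 0 := by
    rw [← CStarRing.star_mul_self_eq_zero_iff, star_mul, hp.star_eq, hq.star_eq, ← mul_assoc,
      mul_assoc p q q, h, zero_mul]
  rw [← hp.star_eq, ← hq.star_eq, ← star_mul, hqp, star_zero]

theorem IsSelfAdjoint.mul_one_sub_mul_eq_of_mul_mul_self_eq_zero [NormedRing A] [StarRing A]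
    [CStarRing A] {p q : A} (hp : IsSelfAdjoint p) (hq : IsSelfAdjoint q) (h : p * (q * q) = 0) :
    q * (1 - p) * q = q * q := by
  rw [mul_sub, mul_one, sub_mul, mul_assoc q p, hp.mul_eq_zero_of_mul_mul_self_eq_zero hq h,
    mul_zero, sub_zero]

end CStarRing

/-- `R (n + 1) = Φ_{P n}(R n)`, with `Q n` the positive square root of `R n`. -/
structure IsResidualFlow {A : Type*} [Ring A] [PartialOrder A] (P R Q : ℕ → A) : Prop where
  sqrt_nonneg : ∀ n, 0 ≤ Q n
  sqrt_mul_sqrt : ∀ n, Q n * Q n = R n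
  succ_eq : ∀ n, R (n + 1) = Q n * (1 - P n) * Q n

namespace IsResidualFlow

theorem sub_succ_eq {A : Type*} [Ring A] [PartialOrder A] {P R Q : ℕ → A}
    (hf : IsResidualFlow P R Q) (n : ℕ) : R n - R (n + 1) = Q n * P n * Q n := by
  rw [hf.succ_eq, ← hf.sqrt_mul_sqrt]
  noncomm_ring

section CStarAlgebra

variable {A : Type*} [CStarAlgebra A] [PartialOrder A] [StarOrderedRing A] {P R Q : ℕ → A}

theorem eq_of_mul_eq_zero (hf : IsResidualFlow P R Q) {T : A} (hR0 : R 0 = T)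
    (hP : ∀ n, IsSelfAdjoint (P n)) (hPT : ∀ n, P n * T = 0) (n : ℕ) : R n = T := by
  induction n with
  | zero => exact hR0
  | succ n ih =>
    have hQ : IsSelfAdjoint (Q n) := .of_nonneg (hf.sqrt_nonneg n)
    have hPQ : P n * (Q n * Q n) = 0 := by rw [hf.sqrt_mul_sqrt, ih, hPT]
    rw [hf.succ_eq, (hP n).mul_one_sub_mul_eq_of_mul_mul_self_eq_zero hQ hPQ, hf.sqrt_mul_sqrt, ih]

theorem nonneg (hf : IsResidualFlow P R Q) (n : ℕ) : 0 ≤ R n :=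
  hf.sqrt_mul_sqrt n ▸ (IsSelfAdjoint.of_nonneg (hf.sqrt_nonneg n)).mul_self_nonneg

theorem antitone (hf : IsResidualFlow P R Q) (hP : ∀ n, IsStarProjection (P n)) : Antitone R :=
  antitone_nat_of_succ_le fun n => sub_nonneg.mp <|
    hf.sub_succ_eq n ▸ conjugate_nonneg_of_nonneg (hP n).nonneg (hf.sqrt_nonneg n)

theorem sqrt_eq (hf : IsResidualFlow P R Q) (n : ℕ) : CFC.sqrt (R n) = Q n :=
  CFC.sqrt_unique (hf.sqrt_mul_sqrt n) (hf.sqrt_nonneg n)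

theorem antitone_sqrt (hf : IsResidualFlow P R Q) (hP : ∀ n, IsStarProjection (P n)) :
    Antitone Q := by
  have hQ : Q = fun n => CFC.sqrt (R n) := funext fun n => (hf.sqrt_eq n).symm
  exact hQ ▸ CFC.monotone_sqrt.comp_antitone (hf.antitone hP)

theorem norm_sqrt_le (hf : IsResidualFlow P R Q) (hP : ∀ n, IsStarProjection (P n)) (n : ℕ) :
    ‖Q n‖ ≤ ‖Q 0‖ :=
  CStarAlgebra.norm_le_norm_of_nonneg_of_le (hf.sqrt_nonneg n) (hf.antitone_sqrt hP (Nat.zero_le n))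

end CStarAlgebra

end IsResidualFlow

namespace ContinuousLinearMap

theorem tendsto_apply_of_tendsto_pointwise {𝕜 E F ι : Type*} [NontriviallyNormedField 𝕜]
    [SeminormedAddCommGroup E] [NormedSpace 𝕜 E] [SeminormedAddCommGroup F] [NormedSpace 𝕜 F]
    {l : Filter ι} {B : ι → E →L[𝕜] F} {L : E →L[𝕜] F} {C : ℝ} (hB : ∀ i, ‖B i‖ ≤ C)
    (hBL : ∀ y, Tendsto (fun i => B i y) l (𝓝 (L y))) {u : ι → E} {a : E}
    (hu : Tendsto u l (𝓝 a)) : Tendsto (fun i => B i (u i)) l (𝓝 (L a)) := by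
  have hsmall : Tendsto (fun i => B i (u i - a)) l (𝓝 0) := by
    refine squeeze_zero_norm (fun i => ((B i).le_opNorm _).trans ?_)
      (by simpa using (tendsto_iff_norm_sub_tendsto_zero.mp hu).const_mul C)
    exact mul_le_mul_of_nonneg_right (hB i) (norm_nonneg _)
  simpa using hsmall.add (hBL a)

theorem range_le_ker_iff_mul_eq_zero {R M : Type*} [Semiring R] [TopologicalSpace M]
    [AddCommMonoid M] [Module R M] {S T : M →L[R] M} :
    LinearMap.range (T : M →ₗ[R] M) ≤ LinearMap.ker (S : M →ₗ[R] M) ↔ S * T = 0 := by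
  rw [LinearMap.range_le_ker_iff, ← Module.End.mul_eq_comp, ← toLinearMap_mul, ← toLinearMap_zero,
    coe_inj]

open scoped InnerProductSpace ComplexOrder

section RCLike

variable {𝕜 E : Type*} [RCLike 𝕜] [NormedAddCommGroup E] [InnerProductSpace 𝕜 E]

theorem isPositive_of_tendsto {A : ℕ → E →L[𝕜] E} {L : E →L[𝕜] E} (hA : ∀ n, (A n).IsPositive)
    (hL : ∀ x, Tendsto (fun n => A n x) atTop (𝓝 (L x))) : L.IsPositive := by
  refine (isPositive_iff L).mpr ⟨fun x y => ?_, fun x => ?_⟩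
  · refine tendsto_nhds_unique ((hL x).inner tendsto_const_nhds) ?_
    exact (tendsto_const_nhds.inner (hL y)).congr fun n => ((hA n).isSymmetric x y).symm
  · exact ge_of_tendsto' ((hL x).inner tendsto_const_nhds) fun n => (hA n).inner_nonneg_left x

end RCLike

variable {E : Type*} [NormedAddCommGroup E] [InnerProductSpace ℂ E] [CompleteSpace E]

theorem norm_apply_sq_le_of_nonneg {D : E →L[ℂ] E} (hD : 0 ≤ D) (x : E) :
    ‖D x‖ ^ 2 ≤ ‖D‖ * RCLike.re ⟪D x, x⟫_ℂ := by
  set S := CFC.sqrt D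
  have hS : IsSelfAdjoint S := .of_nonneg (CFC.sqrt_nonneg D)
  have hSS : S * S = D := CFC.sqrt_mul_sqrt_self D hD
  have hnormS : ‖S‖ ^ 2 = ‖D‖ := by
    rw [← hSS, sq, ← CStarRing.norm_star_mul_self, hS.star_eq]
  have hSx : ‖S x‖ ^ 2 = RCLike.re ⟪D x, x⟫_ℂ := by
    rw [← hSS, ← inner_self_eq_norm_sq (𝕜 := ℂ)]
    exact congrArg RCLike.re (hS.isSymmetric (S x) x).symm
  calc ‖D x‖ ^ 2 = ‖S (S x)‖ ^ 2 := by rw [← hSS]; rfl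
    _ ≤ (‖S‖ * ‖S x‖) ^ 2 := by gcongr; exact S.le_opNorm _
    _ = ‖D‖ * RCLike.re ⟪D x, x⟫_ℂ := by rw [mul_pow, hnormS, hSx]

theorem cauchySeq_apply_of_antitone {A : ℕ → E →L[ℂ] E} (h0 : ∀ n, 0 ≤ A n) (hA : Antitone A)
    (x : E) : CauchySeq fun n => A n x := by
  set f : ℕ → ℝ := fun n => RCLike.re ⟪A n x, x⟫_ℂ
  have hsub : ∀ n m, f n - f m = RCLike.re ⟪(A n - A m) x, x⟫_ℂ := fun _ _ => by
    simp only [f, sub_apply, inner_sub_left, map_sub]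
  have hf : Antitone f := fun n m hnm =>
    sub_nonneg.mp <| hsub n m ▸ ((le_def _ _).mp (hA hnm)).re_inner_nonneg_left x
  have hbdd : BddBelow (Set.range f) := ⟨0, Set.forall_mem_range.mpr fun n =>
    ((nonneg_iff_isPositive _).mp (h0 n)).re_inner_nonneg_left x⟩
  have hflim := tendsto_atTop_ciInf hf hbdd
  refine cauchySeq_of_le_tendsto_0' (fun n => √(‖A 0‖ * (f n - ⨅ k, f k))) (fun n m hnm => ?_) ?_
  · have hD : 0 ≤ A n - A m := sub_nonneg.mpr (hA hnm)
    have hnormD : ‖A n - A m‖ ≤ ‖A 0‖ :=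
      CStarAlgebra.norm_le_norm_of_nonneg_of_le hD
        ((sub_le_self _ (h0 m)).trans (hA (Nat.zero_le n)))
    rw [dist_eq_norm, ← sub_apply, Real.le_sqrt (norm_nonneg _)
      (mul_nonneg (norm_nonneg _) (sub_nonneg.mpr (ciInf_le hbdd n)))]
    calc ‖(A n - A m) x‖ ^ 2 ≤ ‖A n - A m‖ * RCLike.re ⟪(A n - A m) x, x⟫_ℂ :=
          norm_apply_sq_le_of_nonneg hD x
      _ ≤ ‖A 0‖ * (f n - ⨅ k, f k) := by
          rw [← hsub]
          gcongr
          · exact sub_nonneg.mpr (hf hnm)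
          · exact ciInf_le hbdd m
  · simpa using ((hflim.sub_const (⨅ k, f k)).const_mul ‖A 0‖).sqrt

end ContinuousLinearMap

namespace IsResidualFlow

open ContinuousLinearMap
open scoped InnerProductSpace

variable {E : Type*} [NormedAddCommGroup E] [InnerProductSpace ℂ E] [CompleteSpace E]
  {P R Q : ℕ → E →L[ℂ] E} {L : E →L[ℂ] E}

theorem tendsto_proj_mul_sqrt_apply (hf : IsResidualFlow P R Q) (hP : ∀ n, IsStarProjection (P n))
    (hL : ∀ x, Tendsto (fun n => R n x) atTop (𝓝 (L x))) (y : E) :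
    Tendsto (fun n => (P n * Q n) y) atTop (𝓝 0) := by
  have hQ : ∀ n, IsSelfAdjoint (Q n) := fun n => .of_nonneg (hf.sqrt_nonneg n)
  have hsq : ∀ n, ‖(P n * Q n) y‖ ^ 2 = RCLike.re ⟪(R n - R (n + 1)) y, y⟫_ℂ := fun n => by
    have hstar : star (P n * Q n) * (P n * Q n) = R n - R (n + 1) := by
      rw [hf.sub_succ_eq, star_mul, (hP n).isSelfAdjoint.star_eq, (hQ n).star_eq, mul_assoc (Q n),
        ← mul_assoc (P n) (P n), (hP n).isIdempotentElem.eq, ← mul_assoc]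
    rw [apply_norm_sq_eq_inner_adjoint_left, ← star_eq_adjoint, ← hstar]
    rfl
  have hdiff : Tendsto (fun n => RCLike.re ⟪(R n - R (n + 1)) y, y⟫_ℂ) atTop (𝓝 0) := by
    have hinner : Tendsto (fun n => ⟪R n y - R (n + 1) y, y⟫_ℂ) atTop (𝓝 ⟪L y - L y, y⟫_ℂ) :=
      ((hL y).sub ((hL y).comp (tendsto_add_atTop_nat 1))).inner tendsto_const_nhds
    simpa [Function.comp_def] using (Complex.continuous_re.tendsto _).comp hinner
  have hroot := hdiff.sqrt
  rw [Real.sqrt_zero] at hroot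
  refine tendsto_zero_iff_norm_tendsto_zero.mpr (hroot.congr fun n => ?_)
  rw [← hsq, Real.sqrt_sq (norm_nonneg _)]

theorem tendsto_proj_apply (hf : IsResidualFlow P R Q) (hP : ∀ n, IsStarProjection (P n))
    (hL : ∀ x, Tendsto (fun n => R n x) atTop (𝓝 (L x))) (x : E) :
    Tendsto (fun n => P n (R n x)) atTop (𝓝 0) := by
  obtain ⟨v, hv⟩ := cauchySeq_tendsto_of_complete <|
    cauchySeq_apply_of_antitone hf.sqrt_nonneg (hf.antitone_sqrt hP) x
  have hbound : ∀ n, ‖P n * Q n‖ ≤ ‖Q 0‖ := fun n =>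
    (norm_mul_le _ _).trans <| by
      simpa using mul_le_mul (IsStarProjection.norm_le _ (hP n)) (hf.norm_sqrt_le hP n)
        (norm_nonneg _) zero_le_one
  have hPQ : ∀ y, Tendsto (fun n => (P n * Q n) y) atTop (𝓝 ((0 : E →L[ℂ] E) y)) := by
    simpa using hf.tendsto_proj_mul_sqrt_apply hP hL
  simpa [← hf.sqrt_mul_sqrt] using tendsto_apply_of_tendsto_pointwise hbound hPQ hv

theorem mul_limit_eq_zero (hf : IsResidualFlow P R Q) (hP : ∀ n, IsStarProjection (P n))
    (hL : ∀ x, Tendsto (fun n => R n x) atTop (𝓝 (L x))) {φ : ℕ → ℕ} (hφ : Tendsto φ atTop atTop)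
    {P₀ : E →L[ℂ] E} (hφP : ∀ k, P (φ k) = P₀) : P₀ * L = 0 := by
  ext x
  refine tendsto_nhds_unique ((P₀.continuous.tendsto _).comp ((hL x).comp hφ)) ?_
  simpa [hφP, Function.comp_def] using (hf.tendsto_proj_apply hP hL x).comp hφ

end IsResidualFlow

theorem attainable_limits_eq_positive_cone_on_K_general
    {H : Type*} [NormedAddCommGroup H] [InnerProductSpace ℂ H] [CompleteSpace H]
    (PA PB : H →L[ℂ] H)
    (hPAsa : IsSelfAdjoint PA) (hPAidem : IsIdempotentElem PA)
    (hPBsa : IsSelfAdjoint PB) (hPBidem : IsIdempotentElem PB)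
    (T QT : H →L[ℂ] H)
    (hQTpos : QT.IsPositive) (hQTsq : QT * QT = T)
    (hTK : LinearMap.range (T : H →ₗ[ℂ] H) ≤ LinearMap.ker (PA : H →ₗ[ℂ] H) ⊓ LinearMap.ker (PB : H →ₗ[ℂ] H)) :
    (LinearMap.range (QT : H →ₗ[ℂ] H) ≤ LinearMap.ker (PA : H →ₗ[ℂ] H) ⊓ LinearMap.ker (PB : H →ₗ[ℂ] H)) ∧
    (QT * (1 - PA) * QT = T ∧ QT * (1 - PB) * QT = T) ∧
    (∀ (R Q : ℕ → (H →L[ℂ] H)), R 0 = T →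
      (∀ n, (Q n).IsPositive) → (∀ n, Q n * Q n = R n) →
      (∀ n, R (n + 1) = Q n * (1 - (if Even n then PB else PA)) * Q n) →
      ∀ n, R n = T) ∧
    (∀ (R Q : ℕ → (H →L[ℂ] H)) (Rinf : H →L[ℂ] H), (R 0).IsPositive →
      (∀ n, (Q n).IsPositive) → (∀ n, Q n * Q n = R n) →
      (∀ n, R (n + 1) = Q n * (1 - (if Even n then PB else PA)) * Q n) →
      (∀ x : H, Tendsto (fun n => R n x) atTop (𝓝 (Rinf x))) →
      Rinf.IsPositive ∧ LinearMap.range (Rinf : H →ₗ[ℂ] H) ≤ LinearMap.ker (PA : H →ₗ[ℂ] H) ⊓ LinearMap.ker (PB : H →ₗ[ℂ] H)) := by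
  simp only [le_inf_iff, ContinuousLinearMap.range_le_ker_iff_mul_eq_zero] at hTK ⊢
  obtain ⟨hTA, hTB⟩ := hTK
  have hQT : IsSelfAdjoint QT := hQTpos.isSelfAdjoint
  have hP : ∀ n : ℕ, IsStarProjection (if Even n then PB else PA) := fun n => by
    split_ifs
    exacts [⟨hPBidem, hPBsa⟩, ⟨hPAidem, hPAsa⟩]
  have hPT : ∀ n : ℕ, (if Even n then PB else PA) * T = 0 := fun n => by split_ifs <;> assumption
  have hflow : ∀ {R Q : ℕ → H →L[ℂ] H}, (∀ n, (Q n).IsPositive) → (∀ n, Q n * Q n = R n) →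
      (∀ n, R (n + 1) = Q n * (1 - (if Even n then PB else PA)) * Q n) →
      IsResidualFlow (fun n => if Even n then PB else PA) R Q := fun hQ hQR hR =>
    ⟨fun n => (ContinuousLinearMap.nonneg_iff_isPositive _).mpr (hQ n), hQR, hR⟩
  refine ⟨⟨?_, ?_⟩, ⟨?_, ?_⟩, fun R Q hR0 hQ hQR hR => ?_, fun R Q Rinf _ hQ hQR hR hL => ?_⟩
  · exact hPAsa.mul_eq_zero_of_mul_mul_self_eq_zero hQT (hQTsq ▸ hTA)
  · exact hPBsa.mul_eq_zero_of_mul_mul_self_eq_zero hQT (hQTsq ▸ hTB)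
  · exact (hPAsa.mul_one_sub_mul_eq_of_mul_mul_self_eq_zero hQT (hQTsq ▸ hTA)).trans hQTsq
  · exact (hPBsa.mul_one_sub_mul_eq_of_mul_mul_self_eq_zero hQT (hQTsq ▸ hTB)).trans hQTsq
  · exact (hflow hQ hQR hR).eq_of_mul_eq_zero hR0 (fun n => (hP n).isSelfAdjoint) hPT
  have hf := hflow hQ hQR hR
  refine ⟨ContinuousLinearMap.isPositive_of_tendsto
    (fun n => (ContinuousLinearMap.nonneg_iff_isPositive _).mp (hf.nonneg n)) hL, ?_, ?_⟩
  · refine hf.mul_limit_eq_zero hP hL (φ := fun k => 2 * k + 1) ?_ fun k => by simp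
    exact tendsto_atTop_mono (fun k => show k ≤ 2 * k + 1 by omega) tendsto_id
  · refine hf.mul_limit_eq_zero hP hL (φ := fun k => 2 * k) ?_ fun k => by simp
    exact tendsto_atTop_mono (fun k => show k ≤ 2 * k by omega) tendsto_id

/-- If `T ≥ 0` has range in `K = ker P_A ∩ ker P_B`, then `T^{1/2}` also has range
in `K`, `Φ_{P_A}(T) = Φ_{P_B}(T) = T`, and `T` is a fixed point of the alternating residual
flow (the flow started at `T` is constant, so `R_∞(T) = T`).  Together with the fact that every
strong limit of the flow is positive with range in `K`, this shows that the set of attainable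
limits `{R_∞(R) : R ∈ B(H)_+}` is exactly the positive operators supported on `K`. -/
theorem attainable_limits_eq_positive_cone_on_K
    {H : Type*} [NormedAddCommGroup H] [InnerProductSpace ℂ H] [CompleteSpace H]
    (PA PB : H →L[ℂ] H)
    (hPAsa : IsSelfAdjoint PA) (hPAidem : IsIdempotentElem PA)
    (hPBsa : IsSelfAdjoint PB) (hPBidem : IsIdempotentElem PB)
    (T QT : H →L[ℂ] H) (hT : T.IsPositive)
    (hQTpos : QT.IsPositive) (hQTsq : QT * QT = T)
    (hTK : LinearMap.range (T : H →ₗ[ℂ] H) ≤ LinearMap.ker (PA : H →ₗ[ℂ] H) ⊓ LinearMap.ker (PB : H →ₗ[ℂ] H)) :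
    (LinearMap.range (QT : H →ₗ[ℂ] H) ≤ LinearMap.ker (PA : H →ₗ[ℂ] H) ⊓ LinearMap.ker (PB : H →ₗ[ℂ] H)) ∧
    (QT * (1 - PA) * QT = T ∧ QT * (1 - PB) * QT = T) ∧
    (∀ (R Q : ℕ → (H →L[ℂ] H)), R 0 = T →
      (∀ n, (Q n).IsPositive) → (∀ n, Q n * Q n = R n) →
      (∀ n, R (n + 1) = Q n * (1 - (if Even n then PB else PA)) * Q n) →
      ∀ n, R n = T) ∧
    (∀ (R Q : ℕ → (H →L[ℂ] H)) (Rinf : H →L[ℂ] H), (R 0).IsPositive →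
      (∀ n, (Q n).IsPositive) → (∀ n, Q n * Q n = R n) →
      (∀ n, R (n + 1) = Q n * (1 - (if Even n then PB else PA)) * Q n) →
      (∀ x : H, Tendsto (fun n => R n x) atTop (𝓝 (Rinf x))) →
      Rinf.IsPositive ∧ LinearMap.range (Rinf : H →ₗ[ℂ] H) ≤ LinearMap.ker (PA : H →ₗ[ℂ] H) ⊓ LinearMap.ker (PB : H →ₗ[ℂ] H)) :=
  attainable_limits_eq_positive_cone_on_K_general PA PB hPAsa hPAidem hPBsa hPBidem T QT hQTpos
    hQTsq hTK
end

section
/- There exist a positive operator R_0 and orthogonal projections P_A, P_B on a finite-dimensional Hilbert space such that the limit R_∞ of the alternating residual flow is 0 while the shorted operator S = R_0|_K with K = ker P_A ∩ ker P_B is nonzero; hence R_∞ = S fails in general. -/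
/-!
Take `P_A = P_B = P := 1 - e₂e₂ᵀ`, so `K = span e₂`. The square root of `R₀ = [[5,3],[3,2]]` is
`Q₀ = [[2,1],[1,1]]`, so the first step gives the rank-one operator `R₁ = Q₀e₂(Q₀e₂)ᵀ = vvᵀ` with
`v = (1,1)`. On rank-one operators the flow only rescales: `(c vvᵀ)^{1/2} M (c vvᵀ)^{1/2}` is
`c ⟨v, Mv⟩/⟨v, v⟩ vvᵀ`, and here the factor is `1/2`, so `Rₙ → 0`. The shorted operator, on the
other hand, is `e₂e₂ᵀ / ⟨e₂, R₀⁻¹e₂⟩ = (1/5) e₂e₂ᵀ ≠ 0`.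
-/

open Filter Topology

namespace Matrix

section CommSemiring

variable {l m n o α : Type*} [Fintype m] [Fintype n] [CommSemiring α]

theorem vecMulVec_mul_mul_vecMulVec (u : l → α) (v : m → α) (M : Matrix m n α) (w : n → α)
    (x : o → α) : vecMulVec u v * M * vecMulVec w x = (v ⬝ᵥ M *ᵥ w) • vecMulVec u x := by
  rw [vecMulVec_mul, vecMulVec_mul_vecMulVec, vecMulVec_smul, dotProduct_mulVec]

theorem IsSymm.mul_vecMulVec_mul {Q : Matrix n n α} (hQ : Q.IsSymm) (u v : n → α) :
    Q * vecMulVec u v * Q = vecMulVec (Q *ᵥ u) (Q *ᵥ v) := by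
  rw [mul_vecMulVec, vecMulVec_mul, ← mulVec_transpose, hQ.eq]

theorem isIdempotentElem_vecMulVec_self {u : n → α} (hu : u ⬝ᵥ u = 1) :
    IsIdempotentElem (vecMulVec u u) := by
  rw [IsIdempotentElem, vecMulVec_mul_vecMulVec, hu, one_smul]

end CommSemiring

section CommRing

variable {l m n α : Type*} [Fintype m] [Fintype n] [CommRing α]

theorem range_mulVecLin_le_ker_mulVecLin_iff {A : Matrix m n α} {B : Matrix l m α} :
    LinearMap.range A.mulVecLin ≤ LinearMap.ker B.mulVecLin ↔ B * A = 0 := by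
  classical
  rw [LinearMap.range_le_ker_iff, ← mulVecLin_mul, ← toLin'_apply', LinearEquiv.map_eq_zero_iff]

theorem IsSymm.eq_smul_vecMulVec_of_one_sub_mul_eq_zero [DecidableEq n] {Y : Matrix n n α}
    (hY : Y.IsSymm) {u : n → α} (h : (1 - vecMulVec u u) * Y = 0) :
    Y = (u ⬝ᵥ Y *ᵥ u) • vecMulVec u u := by
  have hEY : vecMulVec u u * Y = Y := by
    rw [sub_mul, one_mul, sub_eq_zero] at h
    exact h.symm
  have hYE : Y * vecMulVec u u = Y := by
    simpa only [transpose_mul, hY.eq, transpose_vecMulVec] using congrArg (·ᵀ) hEY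
  calc Y = vecMulVec u u * Y * vecMulVec u u := by rw [hEY, hYE]
    _ = (u ⬝ᵥ Y *ᵥ u) • vecMulVec u u := vecMulVec_mul_mul_vecMulVec ..

end CommRing

variable {n : Type*}

theorem IsHermitian.isSymm {Q : Matrix n n ℝ} (hQ : Q.IsHermitian) : Q.IsSymm := by
  rw [IsSymm, ← conjTranspose_eq_transpose_of_trivial, hQ.eq]

variable [Fintype n]

theorem posSemidef_vecMulVec_self (v : n → ℝ) : (vecMulVec v v).PosSemidef := by
  simpa using posSemidef_vecMulVec_self_star v

open scoped ComplexOrder MatrixOrder Matrix.Norms.L2Operator in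
theorem PosSemidef.eq_of_sq_eq_sq {𝕜 : Type*} [RCLike 𝕜] [DecidableEq n] {A B : Matrix n n 𝕜}
    (hA : A.PosSemidef) (hB : B.PosSemidef) (h : A ^ 2 = B ^ 2) : A = B :=
  (CFC.sq_eq_sq_iff A B hA.nonneg hB.nonneg).mp h

theorem PosSemidef.smul_dotProduct_sq_le {R : Matrix n n ℝ} {c : ℝ} {u : n → ℝ}
    (h : (R - c • vecMulVec u u).PosSemidef) (x : n → ℝ) : c * (x ⬝ᵥ u) ^ 2 ≤ x ⬝ᵥ R *ᵥ x := by
  have := h.dotProduct_mulVec_nonneg x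
  simp [sub_mulVec, smul_mulVec, vecMulVec_mulVec, dotProduct_comm u x] at this
  nlinarith

variable [DecidableEq n]

theorem PosSemidef.mul_mul_eq_of_sq_eq_smul_vecMulVec {Q : Matrix n n ℝ}
    (hQ : Q.PosSemidef) {c : ℝ} (hc : 0 ≤ c) {v : n → ℝ} (hv : v ≠ 0)
    (hQv : Q ^ 2 = c • vecMulVec v v) (M : Matrix n n ℝ) :
    Q * M * Q = (c * (v ⬝ᵥ M *ᵥ v) / (v ⬝ᵥ v)) • vecMulVec v v := by
  have hvv : 0 < v ⬝ᵥ v := by simpa using dotProduct_self_star_pos_iff.mpr hv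
  set a := √(c / (v ⬝ᵥ v))
  have ha : a ^ 2 = c / (v ⬝ᵥ v) := Real.sq_sqrt (div_nonneg hc hvv.le)
  have hQa : Q = a • vecMulVec v v := by
    refine hQ.eq_of_sq_eq_sq ((posSemidef_vecMulVec_self v).smul (Real.sqrt_nonneg _)) ?_
    rw [hQv, smul_pow, sq (vecMulVec v v), vecMulVec_mul_vecMulVec, vecMulVec_smul, smul_smul, ha,
      div_mul_cancel₀ _ hvv.ne']
  rw [hQa, Matrix.smul_mul, Matrix.mul_smul, Matrix.smul_mul, vecMulVec_mul_mul_vecMulVec,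
    smul_smul, smul_smul, ← sq a, ha, div_mul_eq_mul_div]

section ResidualFlow

variable {R Q : ℕ → Matrix n n ℝ} {M : Matrix n n ℝ} {v : n → ℝ}

theorem residualFlow_eq_pow_smul_vecMulVec (hM : M.PosSemidef) (hQ : ∀ k, (Q k).PosSemidef)
    (hsq : ∀ k, Q k ^ 2 = R k) (hstep : ∀ k, R (k + 1) = Q k * M * Q k) (hv : v ≠ 0)
    (hR : R 1 = vecMulVec v v) (k : ℕ) :
    R (k + 1) = ((v ⬝ᵥ M *ᵥ v) / (v ⬝ᵥ v)) ^ k • vecMulVec v v := by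
  induction k with
  | zero => simpa using hR
  | succ k ih =>
    have hρ : 0 ≤ (v ⬝ᵥ M *ᵥ v) / (v ⬝ᵥ v) :=
      div_nonneg (by simpa using hM.dotProduct_mulVec_nonneg v)
        (by simpa using dotProduct_star_self_nonneg v)
    rw [hstep, (hQ _).mul_mul_eq_of_sq_eq_smul_vecMulVec (pow_nonneg hρ k) hv ((hsq _).trans ih),
      pow_succ, mul_div_assoc]

theorem tendsto_residualFlow_zero (hM : M.PosSemidef) (hQ : ∀ k, (Q k).PosSemidef)
    (hsq : ∀ k, Q k ^ 2 = R k) (hstep : ∀ k, R (k + 1) = Q k * M * Q k) (hv : v ≠ 0)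
    (hR : R 1 = vecMulVec v v) (hMv : v ⬝ᵥ M *ᵥ v < v ⬝ᵥ v) : Tendsto R atTop (𝓝 0) := by
  have hvv : 0 < v ⬝ᵥ v := by simpa using dotProduct_self_star_pos_iff.mpr hv
  have hρ : Tendsto (fun k ↦ ((v ⬝ᵥ M *ᵥ v) / (v ⬝ᵥ v)) ^ k • vecMulVec v v) atTop (𝓝 0) := by
    simpa using (tendsto_pow_atTop_nhds_zero_of_lt_one
      (div_nonneg (by simpa using hM.dotProduct_mulVec_nonneg v) hvv.le)
      ((div_lt_one hvv).mpr hMv)).smul_const (vecMulVec v v)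
  exact (tendsto_add_atTop_iff_nat 1).mp <|
    hρ.congr fun k ↦ (residualFlow_eq_pow_smul_vecMulVec hM hQ hsq hstep hv hR k).symm

end ResidualFlow

end Matrix

open Matrix

theorem two_one_one_one_sq : !![(2 : ℝ), 1; 1, 1] ^ 2 = !![5, 3; 3, 2] := by
  rw [sq, mul_fin_two]; norm_num

theorem posSemidef_two_one_one_one : (!![(2 : ℝ), 1; 1, 1]).PosSemidef := by
  have : !![(2 : ℝ), 1; 1, 1] = vecMulVec ![1, 0] ![1, 0] + vecMulVec ![1, 1] ![1, 1] := by
    ext i j; fin_cases i <;> fin_cases j <;> norm_num [vecMulVec]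
  rw [this]
  exact (posSemidef_vecMulVec_self _).add (posSemidef_vecMulVec_self _)

theorem five_three_three_two_sub_smul_vecMulVec :
    !![(5 : ℝ), 3; 3, 2] - (1 / 5 : ℝ) • vecMulVec ![0, 1] ![0, 1] =
      (1 / 5 : ℝ) • vecMulVec ![5, 3] ![5, 3] := by
  ext i j; fin_cases i <;> fin_cases j <;> norm_num [vecMulVec]

/-- There exist a positive operator `R_0` and orthogonal projections `P_A, P_B`
on a finite-dimensional Hilbert space (here `ℝ²`, operators as `2×2` matrices) such that the
limit of the alternating residual flow is `0`, while the shorted operator `S = R_0|_K` with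
`K = ker P_A ∩ ker P_B` is nonzero; hence `R_∞ = S` fails in general. -/
theorem exists_flow_limit_zero_but_shorted_nonzero :
    ∃ R0 PA PB : Matrix (Fin 2) (Fin 2) ℝ,
      R0.PosSemidef ∧
      PA.IsHermitian ∧ PA * PA = PA ∧
      PB.IsHermitian ∧ PB * PB = PB ∧
      -- the alternating residual flow started at R0 converges (strongly) to 0:
      (∀ R Q : ℕ → Matrix (Fin 2) (Fin 2) ℝ,
        R 0 = R0 →
        (∀ n, (Q n).PosSemidef) → (∀ n, (Q n) ^ 2 = R n) →
        (∀ n, R (n + 1) = Q n * (1 - (if Even n then PB else PA)) * Q n) →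
        Tendsto R atTop (𝓝 0)) ∧
      -- yet there is a nonzero shorted operator S = R0|_K with K = ker PA ∩ ker PB:
      (∃ S : Matrix (Fin 2) (Fin 2) ℝ,
        S.PosSemidef ∧ (R0 - S).PosSemidef ∧
        LinearMap.range S.mulVecLin ≤
          LinearMap.ker PA.mulVecLin ⊓ LinearMap.ker PB.mulVecLin ∧
        (∀ Y : Matrix (Fin 2) (Fin 2) ℝ, Y.PosSemidef → (R0 - Y).PosSemidef →
          LinearMap.range Y.mulVecLin ≤
            LinearMap.ker PA.mulVecLin ⊓ LinearMap.ker PB.mulVecLin →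
          (S - Y).PosSemidef) ∧
        S ≠ 0) := by
  have hu : ![(0 : ℝ), 1] ⬝ᵥ ![0, 1] = 1 := by simp
  have hP := isHermitian_one.sub (posSemidef_vecMulVec_self ![(0 : ℝ), 1]).isHermitian
  have hPP := (isIdempotentElem_vecMulVec_self hu).one_sub
  refine ⟨!![5, 3; 3, 2], 1 - vecMulVec ![0, 1] ![0, 1], 1 - vecMulVec ![0, 1] ![0, 1],
    two_one_one_one_sq ▸ posSemidef_two_one_one_one.pow 2, hP, hPP, hP, hPP,
    fun R Q hR0 hQ hsq hstep ↦ ?_, (1 / 5 : ℝ) • vecMulVec ![0, 1] ![0, 1],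
    (posSemidef_vecMulVec_self _).smul (by norm_num), ?_, ?_, fun Y hY hRY hYK ↦ ?_, ?_⟩
  · simp only [ite_self, sub_sub_cancel] at hstep
    have hQ0 : Q 0 = !![2, 1; 1, 1] :=
      (hQ 0).eq_of_sq_eq_sq posSemidef_two_one_one_one (by rw [hsq, hR0, two_one_one_one_sq])
    refine tendsto_residualFlow_zero (posSemidef_vecMulVec_self _) hQ hsq hstep (v := ![1, 1])
      (by simp [funext_iff]) ?_ (by norm_num [vecMulVec, dotProduct, mulVec])
    rw [hstep, hQ0, posSemidef_two_one_one_one.isHermitian.isSymm.mul_vecMulVec_mul]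
    congr 1 <;> ext i <;> fin_cases i <;> norm_num [mulVec, dotProduct]
  · rw [five_three_three_two_sub_smul_vecMulVec]
    exact (posSemidef_vecMulVec_self _).smul (by norm_num)
  · rw [inf_idem, range_mulVecLin_le_ker_mulVecLin_iff, Matrix.mul_smul,
      (isIdempotentElem_vecMulVec_self hu).one_sub_mul_self, smul_zero]
  · rw [inf_idem, range_mulVecLin_le_ker_mulVecLin_iff] at hYK
    obtain ⟨y, rfl⟩ : ∃ y : ℝ, Y = y • vecMulVec ![0, 1] ![0, 1] :=
      ⟨_, hY.isHermitian.isSymm.eq_smul_vecMulVec_of_one_sub_mul_eq_zero hYK⟩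
    -- `(3, -5) = -R₀⁻¹e₂` is the test vector that makes this bound sharp
    have hy := hRY.smul_dotProduct_sq_le ![3, -5]
    norm_num [dotProduct, mulVec] at hy
    rw [← sub_smul]
    exact (posSemidef_vecMulVec_self _).smul (by linarith)
  · exact smul_ne_zero (by norm_num) (vecMulVec_ne_zero (by simp) (by simp))
end

section
/- Let R_0 ≥ 0 and H_{R_0} = closure of ran(R_0^{1/2}). For every R with 0 ≤ R ≤ R_0 there exists a unique positive contraction T on H_{R_0} such that R = R_0^{1/2} T R_0^{1/2}. -/
/-!
Put `S = √R`. From `S† S = R ≤ R₀ = Q₀† Q₀` we get `‖S x‖ ≤ ‖Q₀ x‖`, so `Q₀ x ↦ S x` is a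
well-defined contraction on `ran Q₀`; extended to its closure `K` and by zero on `Kᗮ`, it gives a
contraction `C` with `C Q₀ = S` (Douglas' lemma), and `T = C† C` satisfies
`Q₀ T Q₀ = (C Q₀)† (C Q₀) = S† S = R`. For uniqueness, if `Q₀ T Q₀ = Q₀ T' Q₀` then
`(T - T') Q₀ x` lies in `K ∩ ker Q₀ = K ∩ Kᗮ = 0`, so `T = T'` on `ran Q₀`, hence on `K` by
continuity, and both vanish on `Kᗮ`.
-/

open scoped InnerProduct

namespace ContinuousLinearMap

variable {𝕜 E F G : Type*} [RCLike 𝕜]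

theorem norm_apply_le_of_adjoint_comp_self_le
    [NormedAddCommGroup E] [InnerProductSpace 𝕜 E] [CompleteSpace E]
    [NormedAddCommGroup F] [InnerProductSpace 𝕜 F] [CompleteSpace F]
    [NormedAddCommGroup G] [InnerProductSpace 𝕜 G] [CompleteSpace G]
    {A : E →L[𝕜] F} {B : E →L[𝕜] G} (h : A† ∘L A ≤ B† ∘L B) (x : E) : ‖A x‖ ≤ ‖B x‖ := by
  have := h.re_inner_nonneg_left x
  rw [sub_apply, inner_sub_left, map_sub, sub_nonneg, ← apply_norm_sq_eq_inner_adjoint_left,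
    ← apply_norm_sq_eq_inner_adjoint_left] at this
  exact (sq_le_sq₀ (norm_nonneg _) (norm_nonneg _)).mp this

theorem exists_norm_le_one_comp_eq_of_norm_apply_le
    [NormedAddCommGroup E] [NormedSpace 𝕜 E]
    [NormedAddCommGroup F] [InnerProductSpace 𝕜 F] [CompleteSpace F]
    [NormedAddCommGroup G] [NormedSpace 𝕜 G] [CompleteSpace G]
    (A : E →L[𝕜] F) (B : E →L[𝕜] G) (h : ∀ x, ‖B x‖ ≤ ‖A x‖) :
    ∃ C : F →L[𝕜] G, ‖C‖ ≤ 1 ∧ C ∘L A = B ∧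
      ∀ y ∈ (LinearMap.range (A : E →ₗ[𝕜] F)).topologicalClosureᗮ, C y = 0 := by
  set K := (LinearMap.range (A : E →ₗ[𝕜] F)).topologicalClosure
  let e : E →ₗ[𝕜] K := (A : E →ₗ[𝕜] F).codRestrict K fun x =>
    Submodule.le_topologicalClosure _ (LinearMap.mem_range_self _ x)
  have he : DenseRange e := by
    rw [DenseRange, Subtype.dense_iff, ← Set.range_comp]
    exact subset_rfl
  have hB : ∀ x, ‖B x‖ ≤ 1 * ‖e x‖ := fun x => (one_mul ‖A x‖).symm ▸ h x
  let C₀ : K →L[𝕜] G := (B : E →ₗ[𝕜] G).extendOfNorm e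
  refine ⟨C₀ ∘L K.orthogonalProjectionOnto, ?_, ?_, fun y hy => ?_⟩
  · calc _ ≤ ‖C₀‖ * ‖(K.orthogonalProjectionOnto : F →L[𝕜] K)‖ := opNorm_comp_le _ _
      _ ≤ 1 * 1 := by
        gcongr
        · exact LinearMap.opNorm_extendOfNorm_le he zero_le_one hB
        · exact K.orthogonalProjectionOnto_norm_le
      _ = 1 := one_mul 1
  · ext x
    have hproj : K.orthogonalProjectionOnto (A x) = e x :=
      K.orthogonalProjectionOnto_mem_subspace_eq_self (e x)
    simp only [comp_apply, hproj, C₀, LinearMap.extendOfNorm_eq he ⟨1, hB⟩, coe_coe]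
  · simp [Submodule.orthogonalProjectionOnto_apply_of_mem_orthogonal hy]

theorem _root_.IsSelfAdjoint.range_le_of_forall_mem_orthogonal_eq_zero
    [NormedAddCommGroup E] [InnerProductSpace 𝕜 E] [CompleteSpace E]
    {T : E →L[𝕜] E} (hT : IsSelfAdjoint T) {K : Submodule 𝕜 E} [K.HasOrthogonalProjection]
    (h : ∀ x ∈ Kᗮ, T x = 0) : LinearMap.range (T : E →ₗ[𝕜] E) ≤ K :=
  calc LinearMap.range (T : E →ₗ[𝕜] E)
      ≤ (LinearMap.range (T : E →ₗ[𝕜] E)).topologicalClosure := Submodule.le_topologicalClosure _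
    _ = (LinearMap.ker (T : E →ₗ[𝕜] E))ᗮ := by rw [orthogonal_ker, hT.adjoint_eq]
    _ ≤ Kᗮᗮ := Submodule.orthogonal_le h
    _ = K := K.orthogonal_orthogonal

theorem comp_eq_of_adjoint_comp_comp_eq
    [NormedAddCommGroup E] [InnerProductSpace 𝕜 E] [CompleteSpace E]
    [NormedAddCommGroup F] [InnerProductSpace 𝕜 F] [CompleteSpace F] {A : E →L[𝕜] F} {T T' : F →L[𝕜] F}
    (hT : LinearMap.range (T : F →ₗ[𝕜] F) ≤ (LinearMap.range (A : E →ₗ[𝕜] F)).topologicalClosure)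
    (hT' : LinearMap.range (T' : F →ₗ[𝕜] F) ≤ (LinearMap.range (A : E →ₗ[𝕜] F)).topologicalClosure)
    (h : A† ∘L T ∘L A = A† ∘L T' ∘L A) : T ∘L A = T' ∘L A := by
  ext x
  rw [← sub_eq_zero]
  refine (Submodule.orthogonal_disjoint _).le_bot <|
    Submodule.mem_inf.mpr ⟨sub_mem (hT ⟨A x, rfl⟩) (hT' ⟨A x, rfl⟩), ?_⟩
  rw [Submodule.orthogonal_closure, orthogonal_range, LinearMap.mem_ker, coe_coe, map_sub]
  exact sub_eq_zero.mpr (congr($h x))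

theorem ext_of_comp_eq_of_eqOn_orthogonal
    [NormedAddCommGroup E] [NormedSpace 𝕜 E]
    [NormedAddCommGroup F] [InnerProductSpace 𝕜 F] [CompleteSpace F]
    [NormedAddCommGroup G] [NormedSpace 𝕜 G]
    {A : E →L[𝕜] F} {T T' : F →L[𝕜] G} (h : T ∘L A = T' ∘L A)
    (h' : ∀ y ∈ (LinearMap.range (A : E →ₗ[𝕜] F)).topologicalClosureᗮ, T y = T' y) : T = T' := by
  set K := (LinearMap.range (A : E →ₗ[𝕜] F)).topologicalClosure
  have hK : Set.EqOn T T' K := by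
    rw [Submodule.topologicalClosure_coe]
    refine Set.EqOn.closure ?_ T.continuous T'.continuous
    rintro _ ⟨x, rfl⟩
    exact congr($h x)
  ext z
  obtain ⟨a, ha, b, hb, rfl⟩ := K.exists_add_mem_mem_orthogonal z
  rw [map_add, map_add, hK ha, h' b hb]

end ContinuousLinearMap

open ContinuousLinearMap

theorem intrinsic_factorization_unique_general
    {H : Type*} [NormedAddCommGroup H] [InnerProductSpace ℂ H] [CompleteSpace H]
    (R0 Q0 R : H →L[ℂ] H)
    (hQ0 : Q0.IsPositive) (hQ0sq : Q0 * Q0 = R0)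
    (hR : R.IsPositive) (hRle : (R0 - R).IsPositive) :
    ∃! T : H →L[ℂ] H, T.IsPositive ∧ ‖T‖ ≤ 1 ∧
      (∀ x ∈ ((LinearMap.range (Q0 : H →ₗ[ℂ] H)).topologicalClosure)ᗮ, T x = 0) ∧
      LinearMap.range (T : H →ₗ[ℂ] H) ≤ (LinearMap.range (Q0 : H →ₗ[ℂ] H)).topologicalClosure ∧
      R = Q0 * T * Q0 := by
  have hQ0adj : Q0† = Q0 := hQ0.isSelfAdjoint.adjoint_eq
  set S := CFC.sqrt R
  have hS : S† ∘L S = R := by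
    rw [(CFC.sqrt_nonneg R).isSelfAdjoint.adjoint_eq, ← mul_def,
      CFC.sqrt_mul_sqrt_self R ((nonneg_iff_isPositive R).mpr hR)]
  have hSQ0 : ∀ x, ‖S x‖ ≤ ‖Q0 x‖ :=
    norm_apply_le_of_adjoint_comp_self_le (by rwa [hS, hQ0adj, ← mul_def, hQ0sq, le_def])
  obtain ⟨C, hC1, hCQ0, hC0⟩ := exists_norm_le_one_comp_eq_of_norm_apply_le Q0 S hSQ0
  have hT0 : ∀ x ∈ (LinearMap.range (Q0 : H →ₗ[ℂ] H)).topologicalClosureᗮ, (C† ∘L C) x = 0 :=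
    fun x hx => by rw [comp_apply, hC0 x hx, map_zero]
  have hconj : ∀ T : H →L[ℂ] H, Q0 * T * Q0 = Q0† ∘L T ∘L Q0 := fun T => by
    rw [hQ0adj, mul_def, mul_def, comp_assoc]
  have hTrange : LinearMap.range ((C† ∘L C : H →L[ℂ] H) : H →ₗ[ℂ] H) ≤
      (LinearMap.range (Q0 : H →ₗ[ℂ] H)).topologicalClosure :=
    (isPositive_adjoint_comp_self C).isSelfAdjoint.range_le_of_forall_mem_orthogonal_eq_zero hT0
  have hRfact : R = Q0 * (C† ∘L C) * Q0 := by
    rw [hconj, ← hS, ← hCQ0, adjoint_comp, comp_assoc, comp_assoc]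
  refine ⟨C† ∘L C, ⟨isPositive_adjoint_comp_self C, ?_, hT0, hTrange, hRfact⟩, ?_⟩
  · rw [norm_adjoint_comp_self]
    exact mul_le_one₀ hC1 (norm_nonneg C) hC1
  · rintro T ⟨-, -, hT0', hTrange', hRfact'⟩
    refine ext_of_comp_eq_of_eqOn_orthogonal (comp_eq_of_adjoint_comp_comp_eq hTrange' hTrange ?_)
      fun y hy => (hT0' y hy).trans (hT0 y hy).symm
    rw [← hconj, ← hconj, ← hRfact', hRfact]

/-- Let `R_0 ≥ 0` with positive square root `Q0 = R_0^{1/2}` and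
`H_{R_0}` the closure of `ran Q0`.  Every `R` with `0 ≤ R ≤ R_0` factors uniquely as
`R = Q0 T Q0` with `T` a positive contraction supported on `H_{R_0}`
(i.e. `T` vanishes on `H_{R_0}ᗮ` and has range in `H_{R_0}`). -/
theorem intrinsic_factorization_unique
    {H : Type*} [NormedAddCommGroup H] [InnerProductSpace ℂ H] [CompleteSpace H]
    (R0 Q0 R : H →L[ℂ] H)
    (hR0 : R0.IsPositive) (hQ0 : Q0.IsPositive) (hQ0sq : Q0 * Q0 = R0)
    (hR : R.IsPositive) (hRle : (R0 - R).IsPositive) :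
    ∃! T : H →L[ℂ] H, T.IsPositive ∧ ‖T‖ ≤ 1 ∧
      (∀ x ∈ ((LinearMap.range (Q0 : H →ₗ[ℂ] H)).topologicalClosure)ᗮ, T x = 0) ∧
      LinearMap.range (T : H →ₗ[ℂ] H) ≤ (LinearMap.range (Q0 : H →ₗ[ℂ] H)).topologicalClosure ∧
      R = Q0 * T * Q0 :=
  intrinsic_factorization_unique_general R0 Q0 R hQ0 hQ0sq hR hRle
end

section
/- With M = closure of {u ∈ H_{R_0} : R_0^{1/2} u ∈ K} and P_M the orthogonal projection of H_{R_0} onto M, the operator S' := R_0^{1/2} P_M R_0^{1/2} satisfies 0 ≤ S' ≤ R_0, ran(S') ⊆ K, and dominates every positive R ≤ R_0 with ran(R) ⊆ K; hence S' equals the shorted operator R_0|_K. -/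
/-! If `R ≤ Q²` and `ran R ⊆ K`, then `R` vanishes on `Kᗮ`, so for every `y ∈ Kᗮ`
`⟪R x, x⟫ = ⟪R (x - y), x - y⟫ ≤ ‖Q x - Q y‖²`, and the bound persists for `Q y` in the closure of
`Q(Kᗮ)`. That closure is `(Q⁻¹ K)ᗮ`, which is the orthogonal complement of `M` inside
`closure (ran Q)` because `ker Q = (ran Q)ᗮ ⊆ Q⁻¹ K`; hence it contains `Q x - P_M Q x`, and the
bound becomes `⟪R x, x⟫ ≤ ‖P_M Q x‖² = ⟪Q P_M Q x, x⟫`. -/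

open ContinuousLinearMap
open scoped InnerProductSpace InnerProduct

section

variable {𝕜 E F : Type*} [RCLike 𝕜] [NormedAddCommGroup E] [InnerProductSpace 𝕜 E]
  [NormedAddCommGroup F] [InnerProductSpace 𝕜 F]

namespace Submodule

theorem orthogonal_map_eq_comap_adjoint [CompleteSpace E] [CompleteSpace F] (T : E →L[𝕜] F)
    (U : Submodule 𝕜 E) : (U.map (T : E →ₗ[𝕜] F))ᗮ = Uᗮ.comap (T† : F →ₗ[𝕜] E) := by
  ext v
  simp only [mem_orthogonal, mem_map, mem_comap, forall_exists_index, and_imp,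
    forall_apply_eq_imp_iff₂, coe_coe, adjoint_inner_right]

theorem orthogonal_eq_inf_orthogonal_inf {C V : Submodule 𝕜 E} [C.HasOrthogonalProjection]
    (h : Cᗮ ≤ V) : Vᗮ = C ⊓ (C ⊓ V)ᗮ := by
  have hV : Cᗮ ⊔ C ⊓ V = V := by
    rw [← sup_inf_assoc_of_le C h, sup_comm, sup_orthogonal_of_hasOrthogonalProjection, top_inf_eq]
  calc Vᗮ = (Cᗮ ⊔ C ⊓ V)ᗮ := by rw [hV]
    _ = C ⊓ (C ⊓ V)ᗮ := by rw [← inf_orthogonal, orthogonal_orthogonal]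

end Submodule

namespace ContinuousLinearMap

variable [CompleteSpace E]

theorem IsPositive.conj_of_isSelfAdjoint {T S : E →L[𝕜] E} (hT : T.IsPositive)
    (hS : IsSelfAdjoint S) : (S * T * S).IsPositive := by
  have h := hT.conj_adjoint S
  rw [hS.adjoint_eq] at h
  rwa [mul_assoc]

theorem reApplyInnerSelf_conj_isStarProjection {S P : E →L[𝕜] E} (hS : IsSelfAdjoint S)
    (hP : IsStarProjection P) (x : E) : (S * P * S).reApplyInnerSelf x = ‖P (S x)‖ ^ 2 := by
  have h : (P * S)† ∘L (P * S) = S * P * S := by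
    rw [← star_eq_adjoint, star_mul, hS.star_eq, hP.isSelfAdjoint.star_eq]
    change S * P * (P * S) = S * P * S
    rw [mul_assoc S, ← mul_assoc P, hP.isIdempotentElem.eq, mul_assoc]
  rw [reApplyInnerSelf_apply, ← h, ← apply_norm_sq_eq_inner_adjoint_left]
  rfl

theorem reApplyInnerSelf_mul_self {S : E →L[𝕜] E} (hS : IsSelfAdjoint S) (x : E) :
    (S * S).reApplyInnerSelf x = ‖S x‖ ^ 2 := by
  simpa using reApplyInnerSelf_conj_isStarProjection hS (IsStarProjection.one _) x

theorem conj_isStarProjection_le_mul_self {S P : E →L[𝕜] E} (hS : IsSelfAdjoint S)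
    (hP : IsStarProjection P) : S * P * S ≤ S * S := by
  have h : S * S - S * P * S = S * (1 - P) * S := by noncomm_ring
  rw [le_def, h]
  exact (IsPositive.of_isStarProjection hP.one_sub).conj_of_isSelfAdjoint hS

theorem reApplyInnerSelf_sub_of_apply_eq_zero {R : E →L[𝕜] E} (hR : IsSelfAdjoint R) (x : E)
    {y : E} (hy : R y = 0) : R.reApplyInnerSelf (x - y) = R.reApplyInnerSelf x := by
  have hxy : ⟪R x, y⟫_𝕜 = 0 := by rw [← hR.adjoint_eq, adjoint_inner_left, hy, inner_zero_right]
  simp [reApplyInnerSelf_apply, hy, inner_sub_right, hxy]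

theorem reApplyInnerSelf_le_norm_sub_sq {Q R : E →L[𝕜] E} (hQ : IsSelfAdjoint Q)
    (hR : IsSelfAdjoint R) (hRQ : R ≤ Q * Q) (x : E) {y : E} (hy : R y = 0) :
    R.reApplyInnerSelf x ≤ ‖Q x - Q y‖ ^ 2 := by
  have hle := ((le_def _ _).1 hRQ).re_inner_nonneg_left (x - y)
  rw [sub_apply, inner_sub_left, map_sub, sub_nonneg] at hle
  calc R.reApplyInnerSelf x = R.reApplyInnerSelf (x - y) :=
        (reApplyInnerSelf_sub_of_apply_eq_zero hR x hy).symm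
    _ ≤ (Q * Q).reApplyInnerSelf (x - y) := hle
    _ = ‖Q x - Q y‖ ^ 2 := by rw [reApplyInnerSelf_mul_self hQ, map_sub]

open Submodule in
theorem sub_apply_mem_topologicalClosure_map_orthogonal {Q P : E →L[𝕜] E} {K : Submodule 𝕜 E}
    [K.HasOrthogonalProjection] (hQ : IsSelfAdjoint Q) (hP : IsStarProjection P)
    (hPrange : LinearMap.range (P : E →ₗ[𝕜] E) =
      ((LinearMap.range (Q : E →ₗ[𝕜] E)).topologicalClosure ⊓
        K.comap (Q : E →ₗ[𝕜] E)).topologicalClosure)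
    (x : E) : Q x - P (Q x) ∈ (Kᗮ.map (Q : E →ₗ[𝕜] E)).topologicalClosure := by
  set C := (LinearMap.range (Q : E →ₗ[𝕜] E)).topologicalClosure
  have : CompleteSpace C := (isClosed_topologicalClosure _).completeSpace_coe
  have hCperp : Cᗮ ≤ K.comap (Q : E →ₗ[𝕜] E) := by
    rw [orthogonal_closure, hQ.isStarNormal.orthogonal_range]
    intro v hv
    simp [LinearMap.mem_ker.1 hv]
  have hPC : LinearMap.range (P : E →ₗ[𝕜] E) ≤ C :=
    hPrange ▸ topologicalClosure_minimal _ inf_le_left (isClosed_topologicalClosure _)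
  have hclosure : (Kᗮ.map (Q : E →ₗ[𝕜] E)).topologicalClosure =
      C ⊓ (LinearMap.range (P : E →ₗ[𝕜] E))ᗮ := by
    rw [← orthogonal_orthogonal_eq_closure, orthogonal_map_eq_comap_adjoint, orthogonal_orthogonal,
      hQ.adjoint_eq, orthogonal_eq_inf_orthogonal_inf hCperp, hPrange, orthogonal_closure]
  rw [hclosure, hP.isSelfAdjoint.isStarNormal.orthogonal_range]
  refine ⟨sub_mem (le_topologicalClosure _ ⟨x, rfl⟩) (hPC ⟨Q x, rfl⟩), ?_⟩
  change P (Q x - P (Q x)) = 0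
  rw [map_sub, sub_eq_zero]
  exact (DFunLike.congr_fun hP.isIdempotentElem.eq (Q x)).symm

theorem le_conj_isStarProjection {Q P R : E →L[𝕜] E} {K : Submodule 𝕜 E}
    [K.HasOrthogonalProjection] (hQ : IsSelfAdjoint Q) (hP : IsStarProjection P)
    (hPrange : LinearMap.range (P : E →ₗ[𝕜] E) =
      ((LinearMap.range (Q : E →ₗ[𝕜] E)).topologicalClosure ⊓
        K.comap (Q : E →ₗ[𝕜] E)).topologicalClosure)
    (hR : IsSelfAdjoint R) (hRQ : R ≤ Q * Q) (hRK : LinearMap.range (R : E →ₗ[𝕜] E) ≤ K) :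
    R ≤ Q * P * Q := by
  have hker : Kᗮ ≤ LinearMap.ker (R : E →ₗ[𝕜] E) := by
    rw [← hR.isStarNormal.orthogonal_range]
    exact Submodule.orthogonal_le hRK
  have hbound (x : E) : R.reApplyInnerSelf x ≤ ‖P (Q x)‖ ^ 2 := by
    have h := le_on_closure (f := fun _ => R.reApplyInnerSelf x) (g := fun z => ‖Q x - z‖ ^ 2)
      (s := Kᗮ.map (Q : E →ₗ[𝕜] E))
      (by rintro _ ⟨y, hy, rfl⟩; exact reApplyInnerSelf_le_norm_sub_sq hQ hR hRQ x (hker hy))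
      continuousOn_const (by fun_prop)
      (sub_apply_mem_topologicalClosure_map_orthogonal hQ hP hPrange x)
    simpa using h
  rw [le_def, isPositive_def']
  refine ⟨(hP.isSelfAdjoint.conjugate_self hQ).sub hR, fun x => ?_⟩
  rw [reApplyInnerSelf_apply, sub_apply, inner_sub_left, map_sub, ← reApplyInnerSelf_apply,
    ← reApplyInnerSelf_apply, reApplyInnerSelf_conj_isStarProjection hQ hP, sub_nonneg]
  exact hbound x

end ContinuousLinearMap

end

theorem shorted_operator_intrinsic_form_general
    {H : Type*} [NormedAddCommGroup H] [InnerProductSpace ℂ H] [CompleteSpace H]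
    (R0 Q0 : H →L[ℂ] H)
    (hQ0 : Q0.IsPositive) (hQ0sq : Q0 * Q0 = R0)
    (K : Submodule ℂ H) (hK : IsClosed (K : Set H))
    (M : Submodule ℂ H)
    (hM : M = ((LinearMap.range (Q0 : H →ₗ[ℂ] H)).topologicalClosure ⊓
      Submodule.comap (Q0 : H →ₗ[ℂ] H) K).topologicalClosure)
    (PM : H →L[ℂ] H)
    (hPMsa : IsSelfAdjoint PM) (hPMidem : IsIdempotentElem PM)
    (hPMrange : LinearMap.range (PM : H →ₗ[ℂ] H) = M) :
    (Q0 * PM * Q0).IsPositive ∧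
    (R0 - Q0 * PM * Q0).IsPositive ∧
    LinearMap.range ((Q0 * PM * Q0 : H →L[ℂ] H) : H →ₗ[ℂ] H) ≤ K ∧
    (∀ R : H →L[ℂ] H, R.IsPositive → (R0 - R).IsPositive →
      LinearMap.range (R : H →ₗ[ℂ] H) ≤ K → (Q0 * PM * Q0 - R).IsPositive) := by
  subst hQ0sq
  have hQ : IsSelfAdjoint Q0 := hQ0.isSelfAdjoint
  have hP : IsStarProjection PM := ⟨hPMidem, hPMsa⟩
  have : CompleteSpace K := hK.completeSpace_coe
  have hMK : M ≤ K.comap (Q0 : H →ₗ[ℂ] H) :=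
    hM ▸ Submodule.topologicalClosure_minimal _ inf_le_right (hK.preimage Q0.continuous)
  refine ⟨(IsPositive.of_isStarProjection hP).conj_of_isSelfAdjoint hQ,
    conj_isStarProjection_le_mul_self hQ hP, ?_, fun R hR hRQ hRK =>
      le_conj_isStarProjection hQ hP (hPMrange.trans hM) hR.isSelfAdjoint hRQ hRK⟩
  rintro _ ⟨x, rfl⟩
  exact hMK (hPMrange ▸ ⟨Q0 x, rfl⟩)

/-- With `Q0 = R_0^{1/2}`, `H_{R_0}` the closure of `ran Q0`,
`M` the closure of `{u ∈ H_{R_0} : Q0 u ∈ K}`, and `P_M` the orthogonal projection onto `M`,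
the operator `S' = Q0 P_M Q0` satisfies `0 ≤ S' ≤ R_0`, `ran S' ⊆ K`, and dominates every
positive `R ≤ R_0` with `ran R ⊆ K`; hence `S'` is the shorted operator `R_0|_K`. -/
theorem shorted_operator_intrinsic_form
    {H : Type*} [NormedAddCommGroup H] [InnerProductSpace ℂ H] [CompleteSpace H]
    (R0 Q0 : H →L[ℂ] H)
    (hR0 : R0.IsPositive) (hQ0 : Q0.IsPositive) (hQ0sq : Q0 * Q0 = R0)
    (K : Submodule ℂ H) (hK : IsClosed (K : Set H))
    (M : Submodule ℂ H)
    (hM : M = ((LinearMap.range (Q0 : H →ₗ[ℂ] H)).topologicalClosure ⊓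
      Submodule.comap (Q0 : H →ₗ[ℂ] H) K).topologicalClosure)
    (PM : H →L[ℂ] H)
    (hPMsa : IsSelfAdjoint PM) (hPMidem : IsIdempotentElem PM)
    (hPMrange : LinearMap.range (PM : H →ₗ[ℂ] H) = M) :
    (Q0 * PM * Q0).IsPositive ∧
    (R0 - Q0 * PM * Q0).IsPositive ∧
    LinearMap.range ((Q0 * PM * Q0 : H →L[ℂ] H) : H →ₗ[ℂ] H) ≤ K ∧
    (∀ R : H →L[ℂ] H, R.IsPositive → (R0 - R).IsPositive →
      LinearMap.range (R : H →ₗ[ℂ] H) ≤ K → (Q0 * PM * Q0 - R).IsPositive) :=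
  shorted_operator_intrinsic_form_general R0 Q0 hQ0 hQ0sq K hK M hM PM hPMsa hPMidem hPMrange
end
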